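/- Let P, P̂, P̄ be transition kernels on S×A with, for every (x,a), the support of P(·|x,a) contained in the supports of both P̂(·|x,a) and P̄(·|x,a); let r : S×A → ℝ, γ ∈ [0,1), and φ₁,…,φ_d : S → ℝ. Assume: (i) for every (x,a) and every i, ∑_y P̄(y|x,a)·φᵢ(y) = ∑_y P(y|x,a)·φᵢ(y); (ii) for every (x,a), KL(P(·|x,a)‖P̄(·|x,a)) ≤ KL(P(·|x,a)‖P̂(·|x,a)). Set ε := max_{(x,a)} √(KL(P(·|x,a)‖P̂(·|x,a))) and c₁ := γ√2/(1−γ). Then for every stochastic policy π and every w ∈ ℝ^d, ‖V^π(r,P) − V^π(r,P̄)‖∞ ≤ c₁·ε·‖V^π(r,P) − ∑_{i=1}^d wᵢφᵢ‖∞. -/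

import Mathlib

/-!
Subtracting the Bellman equations `(1 - γ P^π) V = r^π = (1 - γ P̄^π) V̄` gives
`(1 - γ P̄^π) (V - V̄) = γ (P^π - P̄^π) V`, and moment matching lets us replace `V` on the right by
`V - ∑ wᵢ φᵢ`. As `P̄^π` is row-stochastic, `‖(1 - γ P̄^π) u‖ ≥ (1 - γ) ‖u‖`, while by Pinsker's
inequality every row of `P^π - P̄^π` has ℓ¹-norm at most `√(2 KL(P ‖ P̄)) ≤ √2 ε`.

Pinsker's inequality follows from the pointwise bound
`3 (a - b)² / (2 (a + 2b)) ≤ a log (a / b) - a + b` by Cauchy–Schwarz with weights `a + 2b`;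
the pointwise bound reduces to `t = a / b`, where its gap is convex in `t` and vanishes to
second order at `t = 1`.
-/

open Finset Matrix

/-- Supremum norm of a vector indexed by a finite type. -/
noncomputable def supNorm {S : Type*} [Fintype S] (v : S → ℝ) : ℝ := ⨆ x, |v x|

/-- KL divergence of finitely supported probability vectors,
with the convention `0 * log 0 = 0` (automatic since `Real.log 0 = 0`). -/
noncomputable def KLfin {S : Type*} [Fintype S] (p q : S → ℝ) : ℝ :=
  ∑ y, p y * Real.log (p y / q y)

/-- The row-stochastic matrix `P^π` induced by a stochastic policy `π`. -/
noncomputable def stocMat {S A : Type*} [Fintype A]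
    (P : S → A → S → ℝ) (π : S → A → ℝ) : Matrix S S ℝ :=
  Matrix.of fun x y => ∑ a, π x a * P x a y

/-- The value function `V^π(r,P) = (I - γ P^π)⁻¹ r^π` of a stochastic policy `π`. -/
noncomputable def stocVal {S A : Type*} [Fintype S] [DecidableEq S] [Fintype A]
    (γ : ℝ) (r : S → A → ℝ) (P : S → A → S → ℝ) (π : S → A → ℝ) : S → ℝ :=
  ((1 : Matrix S S ℝ) - γ • stocMat P π)⁻¹.mulVec (fun x => ∑ a, π x a * r x a)

noncomputable def pinskerGap (t : ℝ) : ℝ :=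
  t * Real.log t - t + 1 - 3 * (t - 1) ^ 2 / (2 * (t + 2))

noncomputable def pinskerGapDeriv (t : ℝ) : ℝ :=
  Real.log t - 3 * (t - 1) * (t + 5) / (2 * (t + 2) ^ 2)

lemma hasDerivAt_pinskerGapDeriv {t : ℝ} (ht : 0 < t) :
    HasDerivAt pinskerGapDeriv ((t - 1) ^ 2 * (t + 8) / (t * (t + 2) ^ 3)) t := by
  have hnum : HasDerivAt (fun t : ℝ => 3 * (t - 1) * (t + 5)) (3 * ((t + 5) + (t - 1))) t :=
    ((((hasDerivAt_id t).sub_const 1).const_mul 3).mul ((hasDerivAt_id t).add_const 5)).congr_deriv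
      (by simp only [id_eq]; ring)
  have hden : HasDerivAt (fun t : ℝ => 2 * (t + 2) ^ 2) (2 * (2 * (t + 2))) t :=
    ((((hasDerivAt_id t).add_const 2).pow 2).const_mul 2).congr_deriv (by simp only [id_eq]; ring)
  refine ((Real.hasDerivAt_log ht.ne').sub (hnum.div hden (by positivity))).congr_deriv ?_
  field_simp
  ring

lemma hasDerivAt_pinskerGap {t : ℝ} (ht : 0 < t) :
    HasDerivAt pinskerGap (pinskerGapDeriv t) t := by
  have hmulLog : HasDerivAt (fun t : ℝ => t * Real.log t) (Real.log t + 1) t :=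
    ((hasDerivAt_id t).mul (Real.hasDerivAt_log ht.ne')).congr_deriv
      (by simp only [id_eq]; field_simp)
  have hnum : HasDerivAt (fun t : ℝ => 3 * (t - 1) ^ 2) (3 * (2 * (t - 1))) t :=
    ((((hasDerivAt_id t).sub_const 1).pow 2).const_mul 3).congr_deriv (by simp only [id_eq]; ring)
  have hden : HasDerivAt (fun t : ℝ => 2 * (t + 2)) 2 t :=
    (((hasDerivAt_id t).add_const 2).const_mul 2).congr_deriv (mul_one 2)
  refine (((hmulLog.sub (hasDerivAt_id t)).add_const 1).sub
    (hnum.div hden (by positivity))).congr_deriv ?_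
  rw [pinskerGapDeriv]
  field_simp
  ring

lemma monotoneOn_pinskerGapDeriv : MonotoneOn pinskerGapDeriv (Set.Ioi 0) := by
  refine monotoneOn_of_deriv_nonneg (convex_Ioi 0)
    (fun x hx => (hasDerivAt_pinskerGapDeriv hx).continuousAt.continuousWithinAt)
    (fun x hx => ?_) (fun x hx => ?_) <;> rw [interior_Ioi] at hx
  · exact (hasDerivAt_pinskerGapDeriv hx).differentiableAt.differentiableWithinAt
  · have hx : 0 < x := hx
    rw [(hasDerivAt_pinskerGapDeriv hx).deriv]
    positivity

lemma pinskerGap_nonneg {t : ℝ} (ht : 0 ≤ t) : 0 ≤ pinskerGap t := by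
  have hcont : ContinuousOn pinskerGap (Set.Ioi 0) := fun x hx =>
    (hasDerivAt_pinskerGap hx).continuousAt.continuousWithinAt
  have hdiff : DifferentiableOn ℝ pinskerGap (Set.Ioi 0) := fun x hx =>
    (hasDerivAt_pinskerGap hx).differentiableAt.differentiableWithinAt
  have hderiv_one : pinskerGapDeriv 1 = 0 := by norm_num [pinskerGapDeriv]
  have hgap_one : pinskerGap 1 = 0 := by norm_num [pinskerGap]
  rcases ht.eq_or_lt with rfl | ht
  · norm_num [pinskerGap]
  rw [← hgap_one]
  rcases le_total t 1 with h1 | h1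
  · refine antitoneOn_of_deriv_nonpos (convex_Ioc 0 1) (hcont.mono Set.Ioc_subset_Ioi_self)
      (hdiff.mono (interior_subset.trans Set.Ioc_subset_Ioi_self)) (fun x hx => ?_)
      ⟨ht, h1⟩ ⟨one_pos, le_rfl⟩ h1
    rw [interior_Ioc] at hx
    rw [(hasDerivAt_pinskerGap hx.1).deriv, ← hderiv_one]
    exact monotoneOn_pinskerGapDeriv hx.1 (Set.mem_Ioi.2 one_pos) hx.2.le
  · refine monotoneOn_of_deriv_nonneg (convex_Ici 1)
      (hcont.mono fun x (hx : 1 ≤ x) => one_pos.trans_le hx)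
      (hdiff.mono (interior_subset.trans fun x (hx : 1 ≤ x) => one_pos.trans_le hx))
      (fun x hx => ?_) Set.self_mem_Ici h1 h1
    rw [interior_Ici] at hx
    have hx0 : 0 < x := one_pos.trans hx
    rw [(hasDerivAt_pinskerGap hx0).deriv, ← hderiv_one]
    exact monotoneOn_pinskerGapDeriv (Set.mem_Ioi.2 one_pos) hx0 hx.le

lemma pinsker_pointwise {a b : ℝ} (ha : 0 ≤ a) (hb : 0 ≤ b) (hab : b = 0 → a = 0) :
    3 * (a - b) ^ 2 / (2 * (a + 2 * b)) ≤ a * Real.log (a / b) - a + b := by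
  rcases hb.eq_or_lt with rfl | hb
  · simp [hab rfl]
  obtain ⟨t, ht, rfl⟩ : ∃ t, 0 ≤ t ∧ a = t * b := ⟨a / b, div_nonneg ha hb.le, by field_simp⟩
  have hgap := pinskerGap_nonneg ht
  rw [pinskerGap, sub_nonneg, div_le_iff₀ (by positivity)] at hgap
  rw [mul_div_cancel_right₀ t hb.ne', div_le_iff₀ (by positivity)]
  nlinarith [mul_le_mul_of_nonneg_left hgap (sq_nonneg b)]

theorem sum_abs_sub_le_sqrt_two_mul_KLfin {S : Type*} [Fintype S] {p q : S → ℝ}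
    (hp0 : ∀ y, 0 ≤ p y) (hq0 : ∀ y, 0 ≤ q y) (hp1 : ∑ y, p y = 1) (hq1 : ∑ y, q y = 1)
    (hpq : ∀ y, q y = 0 → p y = 0) :
    ∑ y, |p y - q y| ≤ √(2 * KLfin p q) := by
  have hcs : (∑ y, |p y - q y|) ^ 2 ≤
      (∑ y, 3 * (p y - q y) ^ 2 / (2 * (p y + 2 * q y))) * ∑ y, 2 * (p y + 2 * q y) / 3 := by
    refine sum_sq_le_sum_mul_sum_of_sq_le_mul _ (fun y _ => ?_) (fun y _ => ?_) (fun y _ => ?_)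
    · have := hp0 y; have := hq0 y; positivity
    · have := hp0 y; have := hq0 y; positivity
    · have := hp0 y; have := hq0 y
      rcases (by positivity : (0 : ℝ) ≤ p y + 2 * q y).eq_or_lt with h | h
      · simp [show p y = 0 by linarith, show q y = 0 by linarith]
      · rw [sq_abs, div_mul_div_comm, le_div_iff₀ (by positivity)]
        exact le_of_eq (by ring)
  have hweights : ∑ y, 2 * (p y + 2 * q y) / 3 = 2 := by
    simp only [← sum_div, ← mul_sum, sum_add_distrib, hp1, hq1]
    norm_num
  have hKL : ∑ y, 3 * (p y - q y) ^ 2 / (2 * (p y + 2 * q y)) ≤ KLfin p q := by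
    calc _ ≤ ∑ y, (p y * Real.log (p y / q y) - p y + q y) :=
          sum_le_sum fun y _ => pinsker_pointwise (hp0 y) (hq0 y) (hpq y)
      _ = KLfin p q := by rw [sum_add_distrib, sum_sub_distrib, hp1, hq1, KLfin]; ring
  rw [hweights] at hcs
  exact Real.le_sqrt_of_sq_le (by linarith)

lemma supNorm_eq_norm {S : Type*} [Fintype S] (v : S → ℝ) : supNorm v = ‖v‖ :=
  le_antisymm (Real.iSup_le (fun x => norm_le_pi_norm v x) (norm_nonneg v))
    ((pi_norm_le_iff_of_nonneg (Real.iSup_nonneg fun x => abs_nonneg (v x))).2 fun x =>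
      le_ciSup (Set.finite_range fun x => |v x|).bddAbove x)

namespace Matrix

variable {m n : Type*} [Fintype m] [Fintype n]

lemma norm_mulVec_le_of_sum_abs_le {N : Matrix m n ℝ} {c : ℝ} (hc : 0 ≤ c)
    (hN : ∀ x, ∑ y, |N x y| ≤ c) (v : n → ℝ) : ‖N *ᵥ v‖ ≤ c * ‖v‖ := by
  refine (pi_norm_le_iff_of_nonneg (by positivity)).2 fun x => ?_
  calc ‖(N *ᵥ v) x‖ = |∑ y, N x y * v y| := rfl
    _ ≤ ∑ y, |N x y| * ‖v‖ := (abs_sum_le_sum_abs _ _).trans <| sum_le_sum fun y _ => by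
        rw [abs_mul]
        exact mul_le_mul_of_nonneg_left (norm_le_pi_norm v y) (abs_nonneg _)
    _ = (∑ y, |N x y|) * ‖v‖ := (sum_mul _ _ _).symm
    _ ≤ c * ‖v‖ := mul_le_mul_of_nonneg_right (hN x) (norm_nonneg v)

variable [DecidableEq n] {N : Matrix n n ℝ} {γ : ℝ}

lemma norm_mulVec_le_of_mem_rowStochastic (hN : N ∈ rowStochastic ℝ n) (v : n → ℝ) :
    ‖N *ᵥ v‖ ≤ ‖v‖ := by
  simpa using norm_mulVec_le_of_sum_abs_le zero_le_one (fun x => by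
    simp only [abs_of_nonneg (nonneg_of_mem_rowStochastic hN), sum_row_of_mem_rowStochastic hN,
      le_refl]) v

lemma one_sub_mul_norm_le_norm_one_sub_smul_mulVec (hN : N ∈ rowStochastic ℝ n) (hγ : 0 ≤ γ)
    (v : n → ℝ) : (1 - γ) * ‖v‖ ≤ ‖(1 - γ • N) *ᵥ v‖ := by
  have : ‖v‖ ≤ ‖(1 - γ • N) *ᵥ v‖ + γ * ‖v‖ :=
    calc ‖v‖ = ‖(1 - γ • N) *ᵥ v + γ • (N *ᵥ v)‖ := by
          rw [sub_mulVec, one_mulVec, smul_mulVec, sub_add_cancel]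
      _ ≤ ‖(1 - γ • N) *ᵥ v‖ + γ * ‖N *ᵥ v‖ := by
          grw [norm_add_le, norm_smul, Real.norm_of_nonneg hγ]
      _ ≤ ‖(1 - γ • N) *ᵥ v‖ + γ * ‖v‖ := by
          grw [norm_mulVec_le_of_mem_rowStochastic hN]
  linarith

lemma isUnit_one_sub_smul_of_mem_rowStochastic (hN : N ∈ rowStochastic ℝ n) (hγ0 : 0 ≤ γ)
    (hγ1 : γ < 1) : IsUnit (1 - γ • N) := by
  refine mulVec_injective_iff_isUnit.1 fun v w hvw => sub_eq_zero.1 (norm_le_zero_iff.1 ?_)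
  have h := one_sub_mul_norm_le_norm_one_sub_smul_mulVec hN hγ0 (v - w)
  rw [mulVec_sub, hvw, sub_self, norm_zero] at h
  nlinarith [norm_nonneg (v - w)]

lemma one_sub_mul_norm_sub_le {M : Matrix n n ℝ} (hN : N ∈ rowStochastic ℝ n) (hγ : 0 ≤ γ)
    {V V' Φ : n → ℝ} (hVV' : (1 - γ • M) *ᵥ V = (1 - γ • N) *ᵥ V') (hΦ : M *ᵥ Φ = N *ᵥ Φ) :
    (1 - γ) * ‖V - V'‖ ≤ γ * ‖(M - N) *ᵥ (V - Φ)‖ := by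
  have hres : (1 - γ • N) *ᵥ (V - V') = γ • ((M - N) *ᵥ (V - Φ)) := by
    rw [mulVec_sub, ← hVV']
    simp only [sub_mulVec, mulVec_sub, smul_mulVec, one_mulVec, hΦ]
    module
  calc (1 - γ) * ‖V - V'‖ ≤ ‖(1 - γ • N) *ᵥ (V - V')‖ :=
        one_sub_mul_norm_le_norm_one_sub_smul_mulVec hN hγ _
    _ = γ * ‖(M - N) *ᵥ (V - Φ)‖ := by rw [hres, norm_smul, Real.norm_of_nonneg hγ]

end Matrix

section StochasticPolicy

variable {S A : Type*} [Fintype S] [Fintype A] {π : S → A → ℝ}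

lemma stocMat_mulVec_apply (P : S → A → S → ℝ) (π : S → A → ℝ) (v : S → ℝ) (x : S) :
    (stocMat P π *ᵥ v) x = ∑ a, π x a * ∑ y, P x a y * v y := by
  simp only [mulVec, dotProduct, stocMat, of_apply, sum_mul, mul_sum, mul_assoc]
  exact sum_comm

lemma stocMat_mem_rowStochastic [DecidableEq S] {P : S → A → S → ℝ}
    (hπ0 : ∀ x a, 0 ≤ π x a) (hπ1 : ∀ x, ∑ a, π x a = 1)
    (hP0 : ∀ x a y, 0 ≤ P x a y) (hP1 : ∀ x a, ∑ y, P x a y = 1) :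
    stocMat P π ∈ rowStochastic ℝ S := by
  refine mem_rowStochastic.2 ⟨fun x y => sum_nonneg fun a _ => ?_, funext fun x => ?_⟩
  · exact mul_nonneg (hπ0 x a) (hP0 x a y)
  · simpa [hP1, hπ1] using stocMat_mulVec_apply P π 1 x

lemma stocMat_mulVec_eq_of_moments_eq {ι : Type*} [Fintype ι] {P Q : S → A → S → ℝ}
    {φ : ι → S → ℝ} (h : ∀ x a i, ∑ y, Q x a y * φ i y = ∑ y, P x a y * φ i y) (w : ι → ℝ) :
    stocMat Q π *ᵥ (fun x => ∑ i, w i * φ i x) = stocMat P π *ᵥ (fun x => ∑ i, w i * φ i x) := by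
  have hlin : ∀ K : S → A → S → ℝ, ∀ x a,
      ∑ y, K x a y * ∑ i, w i * φ i y = ∑ i, w i * ∑ y, K x a y * φ i y := fun K x a => by
    simp only [mul_sum]
    rw [sum_comm]
    simp only [mul_left_comm]
  ext x
  simp only [stocMat_mulVec_apply, hlin, h]

lemma sum_abs_stocMat_sub_le {P Q : S → A → S → ℝ} (hπ0 : ∀ x a, 0 ≤ π x a)
    (hπ1 : ∀ x, ∑ a, π x a = 1) {x : S} {c : ℝ} (h : ∀ a, ∑ y, |P x a y - Q x a y| ≤ c) :
    ∑ y, |(stocMat P π - stocMat Q π) x y| ≤ c :=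
  calc ∑ y, |(stocMat P π - stocMat Q π) x y| = ∑ y, |∑ a, π x a * (P x a y - Q x a y)| := by
        simp only [Matrix.sub_apply, stocMat, of_apply, ← sum_sub_distrib, mul_sub]
    _ ≤ ∑ y, ∑ a, π x a * |P x a y - Q x a y| := sum_le_sum fun y _ =>
        (abs_sum_le_sum_abs _ _).trans_eq <| sum_congr rfl fun a _ => by
          rw [abs_mul, abs_of_nonneg (hπ0 x a)]
    _ = ∑ a, π x a * ∑ y, |P x a y - Q x a y| := by
        rw [sum_comm]
        simp only [mul_sum]
    _ ≤ ∑ a, π x a * c := sum_le_sum fun a _ => mul_le_mul_of_nonneg_left (h a) (hπ0 x a)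
    _ = c := by rw [← sum_mul, hπ1, one_mul]

lemma one_sub_smul_stocMat_mulVec_stocVal [DecidableEq S] {γ : ℝ} {r : S → A → ℝ}
    {P : S → A → S → ℝ} (h : IsUnit (1 - γ • stocMat P π)) :
    (1 - γ • stocMat P π) *ᵥ stocVal γ r P π = fun x => ∑ a, π x a * r x a := by
  rw [stocVal, mulVec_mulVec, mul_nonsing_inv _ ((isUnit_iff_isUnit_det _).1 h), one_mulVec]

lemma one_sub_mul_norm_stocVal_sub_le [DecidableEq S] {ι : Type*} [Fintype ι]
    {P Q : S → A → S → ℝ} {γ c : ℝ} (hγ0 : 0 ≤ γ) (hγ1 : γ < 1) (hc : 0 ≤ c)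
    (hπ0 : ∀ x a, 0 ≤ π x a) (hπ1 : ∀ x, ∑ a, π x a = 1)
    (hP0 : ∀ x a y, 0 ≤ P x a y) (hP1 : ∀ x a, ∑ y, P x a y = 1)
    (hQ0 : ∀ x a y, 0 ≤ Q x a y) (hQ1 : ∀ x a, ∑ y, Q x a y = 1)
    (hPQ : ∀ x a, ∑ y, |P x a y - Q x a y| ≤ c) {φ : ι → S → ℝ}
    (hmoments : ∀ x a i, ∑ y, Q x a y * φ i y = ∑ y, P x a y * φ i y) (r : S → A → ℝ)
    (w : ι → ℝ) :
    (1 - γ) * ‖stocVal γ r P π - stocVal γ r Q π‖ ≤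
      γ * c * ‖stocVal γ r P π - fun x => ∑ i, w i * φ i x‖ := by
  have hP := stocMat_mem_rowStochastic hπ0 hπ1 hP0 hP1
  have hQ := stocMat_mem_rowStochastic hπ0 hπ1 hQ0 hQ1
  have hV := one_sub_smul_stocMat_mulVec_stocVal (r := r)
    (isUnit_one_sub_smul_of_mem_rowStochastic hP hγ0 hγ1)
  have hVQ := one_sub_smul_stocMat_mulVec_stocVal (r := r)
    (isUnit_one_sub_smul_of_mem_rowStochastic hQ hγ0 hγ1)
  calc (1 - γ) * ‖stocVal γ r P π - stocVal γ r Q π‖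
      ≤ γ * ‖(stocMat P π - stocMat Q π) *ᵥ (stocVal γ r P π - fun x => ∑ i, w i * φ i x)‖ :=
        one_sub_mul_norm_sub_le hQ hγ0 (hV.trans hVQ.symm)
          (stocMat_mulVec_eq_of_moments_eq hmoments w).symm
    _ ≤ γ * (c * ‖stocVal γ r P π - fun x => ∑ i, w i * φ i x‖) :=
        mul_le_mul_of_nonneg_left (norm_mulVec_le_of_sum_abs_le hc
          (fun x => sum_abs_stocMat_sub_le hπ0 hπ1 (hPQ x)) _) hγ0
    _ = γ * c * ‖stocVal γ r P π - fun x => ∑ i, w i * φ i x‖ := (mul_assoc _ _ _).symm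

end StochasticPolicy

theorem stmt4_general {S A : Type*} [Fintype S] [DecidableEq S] [Fintype A]
    (P Phat Pbar : S → A → S → ℝ)
    (hP0 : ∀ x a y, 0 ≤ P x a y) (hP1 : ∀ x a, ∑ y, P x a y = 1)
    (hPbar0 : ∀ x a y, 0 ≤ Pbar x a y) (hPbar1 : ∀ x a, ∑ y, Pbar x a y = 1)
    (hsuppbar : ∀ x a y, Pbar x a y = 0 → P x a y = 0)
    (r : S → A → ℝ) (γ : ℝ) (hγ0 : 0 ≤ γ) (hγ1 : γ < 1)
    (d : ℕ) (φ : Fin d → S → ℝ)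
    (hmatch : ∀ x a, ∀ i : Fin d, ∑ y, Pbar x a y * φ i y = ∑ y, P x a y * φ i y)
    (hKLle : ∀ x a, KLfin (P x a) (Pbar x a) ≤ KLfin (P x a) (Phat x a))
    (ε c₁ : ℝ)
    (hε : ε = ⨆ x, ⨆ a, Real.sqrt (KLfin (P x a) (Phat x a)))
    (hc₁ : c₁ = γ * Real.sqrt 2 / (1 - γ)) :
    ∀ π : S → A → ℝ, (∀ x a, 0 ≤ π x a) → (∀ x, ∑ a, π x a = 1) →
      ∀ w : Fin d → ℝ,
        supNorm (fun x => stocVal γ r P π x - stocVal γ r Pbar π x) ≤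
          c₁ * ε * supNorm (fun x => stocVal γ r P π x - ∑ i, w i * φ i x) := by
  intro π hπ0 hπ1 w
  have hε0 : 0 ≤ ε := hε ▸ Real.iSup_nonneg fun x => Real.iSup_nonneg fun a => Real.sqrt_nonneg _
  have hL1 : ∀ x a, ∑ y, |P x a y - Pbar x a y| ≤ √2 * ε := fun x a =>
    calc ∑ y, |P x a y - Pbar x a y| ≤ √(2 * KLfin (P x a) (Pbar x a)) :=
          sum_abs_sub_le_sqrt_two_mul_KLfin (hP0 x a) (hPbar0 x a) (hP1 x a) (hPbar1 x a)
            (hsuppbar x a)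
      _ ≤ √2 * √(KLfin (P x a) (Phat x a)) := by
          rw [← Real.sqrt_mul zero_le_two]
          exact Real.sqrt_le_sqrt (by linarith [hKLle x a])
      _ ≤ √2 * ε := by
          refine mul_le_mul_of_nonneg_left (hε ▸ ?_) (Real.sqrt_nonneg 2)
          exact le_ciSup_of_le (Set.finite_range _).bddAbove x
            (le_ciSup (Set.finite_range fun a => √(KLfin (P x a) (Phat x a))).bddAbove a)
  have h := one_sub_mul_norm_stocVal_sub_le hγ0 hγ1 (by positivity) hπ0 hπ1 hP0 hP1 hPbar0
    hPbar1 hL1 hmatch r w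
  change supNorm (stocVal γ r P π - stocVal γ r Pbar π) ≤
    c₁ * ε * supNorm (stocVal γ r P π - fun x => ∑ i, w i * φ i x)
  rw [supNorm_eq_norm, supNorm_eq_norm, hc₁, div_mul_eq_mul_div, div_mul_eq_mul_div,
    le_div_iff₀ (sub_pos.2 hγ1)]
  nlinarith

theorem stmt4 {S A : Type*} [Fintype S] [Nonempty S] [DecidableEq S] [Fintype A] [Nonempty A]
    (P Phat Pbar : S → A → S → ℝ)
    (hP0 : ∀ x a y, 0 ≤ P x a y) (hP1 : ∀ x a, ∑ y, P x a y = 1)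
    (hPhat0 : ∀ x a y, 0 ≤ Phat x a y) (hPhat1 : ∀ x a, ∑ y, Phat x a y = 1)
    (hPbar0 : ∀ x a y, 0 ≤ Pbar x a y) (hPbar1 : ∀ x a, ∑ y, Pbar x a y = 1)
    (hsupphat : ∀ x a y, Phat x a y = 0 → P x a y = 0)
    (hsuppbar : ∀ x a y, Pbar x a y = 0 → P x a y = 0)
    (r : S → A → ℝ) (γ : ℝ) (hγ0 : 0 ≤ γ) (hγ1 : γ < 1)
    (d : ℕ) (φ : Fin d → S → ℝ)
    (hmatch : ∀ x a, ∀ i : Fin d, ∑ y, Pbar x a y * φ i y = ∑ y, P x a y * φ i y)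
    (hKLle : ∀ x a, KLfin (P x a) (Pbar x a) ≤ KLfin (P x a) (Phat x a))
    (ε c₁ : ℝ)
    (hε : ε = ⨆ x, ⨆ a, Real.sqrt (KLfin (P x a) (Phat x a)))
    (hc₁ : c₁ = γ * Real.sqrt 2 / (1 - γ)) :
    ∀ π : S → A → ℝ, (∀ x a, 0 ≤ π x a) → (∀ x, ∑ a, π x a = 1) →
      ∀ w : Fin d → ℝ,
        supNorm (fun x => stocVal γ r P π x - stocVal γ r Pbar π x) ≤
          c₁ * ε * supNorm (fun x => stocVal γ r P π x - ∑ i, w i * φ i x) :=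
  stmt4_general P Phat Pbar hP0 hP1 hPbar0 hPbar1 hsuppbar r γ hγ0 hγ1 d φ hmatch hKLle ε c₁ hε hc₁
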